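/- Under the hypotheses identifying E[Y¹|S=1] with γ_{1,1} (consistency, trial exchangeability and positivity for a=1) and E[Y²|S=1] with ρ (the relative-measure transport functional), the average treatment effect E[Y¹ − Y² | S=1] equals θ := γ_{1,1} − ρ, i.e., Σ_x [E[Y|X=x,S=1,A=1] − E[Y|X=x,S=1,A=0]·E[Y|X=x,S=0,A=2]/E[Y|X=x,S=0,A=0]] · P(X=x|S=1). -/

import Mathlib

/-!
Stratify by `X`. Within the trial population (`S = 1`) the law of total expectation writes
`E[Y¹ - Y² | S = 1]` as the `P(X = x | S = 1)`-weighted sum of the stratum contrasts, strata of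
zero trial mass contributing nothing. In a stratum, `E[Y¹ | x, S = 1]` and `E[Y⁰ | x, S = 1]` are
identified with observed means by exchangeability and consistency. The remaining term
`E[Y² | x, S = 1]` is never observed in the trial; transportability of the relative measure
`E[Y² | x] / E[Y⁰ | x]` from the external source (which is positive on the stratum) gives
`E[Y² | x, S = 1] = E[Y⁰ | x, S = 1] · E[Y² | x, S = 0] / E[Y⁰ | x, S = 0]`, and the two external
means are again identified by exchangeability and consistency in the external source.
-/

open Finset
open scoped Classical

noncomputable def pr {Ω : Type*} [Fintype Ω] (P : Ω → ℝ) (E : Ω → Prop) : ℝ :=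
  ∑ ω, if E ω then P ω else 0

noncomputable def cexp {Ω : Type*} [Fintype Ω] (P : Ω → ℝ) (Y : Ω → ℝ) (E : Ω → Prop) : ℝ :=
  (∑ ω, if E ω then Y ω * P ω else 0) / pr P E

noncomputable def cpr {Ω : Type*} [Fintype Ω] (P : Ω → ℝ) (E F : Ω → Prop) : ℝ :=
  pr P (fun ω => E ω ∧ F ω) / pr P F

section FiniteProbability

variable {Ω : Type*} [Fintype Ω] {P : Ω → ℝ}

lemma pr_nonneg (hP : ∀ ω, 0 ≤ P ω) (E : Ω → Prop) : 0 ≤ pr P E :=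
  sum_nonneg fun ω _ => by split_ifs <;> simp [hP ω]

lemma eq_zero_of_pr_eq_zero (hP : ∀ ω, 0 ≤ P ω) {E : Ω → Prop} (h : pr P E = 0) {ω : Ω}
    (hω : E ω) : P ω = 0 := by
  have := (sum_eq_zero_iff_of_nonneg fun ω _ => by split_ifs <;> simp [hP ω]).mp h ω (mem_univ ω)
  simpa [hω] using this

lemma pr_and_pos_of_cpr_pos (hP : ∀ ω, 0 ≤ P ω) {E F : Ω → Prop} (h : 0 < cpr P E F) :
    0 < pr P (fun ω => F ω ∧ E ω) := by
  have hEF : 0 < pr P (fun ω => E ω ∧ F ω) := by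
    refine (pr_nonneg hP _).lt_of_ne fun h0 => ?_
    rw [cpr, ← h0, zero_div] at h
    exact h.false
  rwa [show (fun ω => F ω ∧ E ω) = fun ω => E ω ∧ F ω from funext fun ω => propext and_comm]

lemma cexp_congr {Y Z : Ω → ℝ} {E : Ω → Prop} (h : ∀ ω, E ω → Y ω = Z ω) :
    cexp P Y E = cexp P Z E := by
  unfold cexp
  congr 1
  refine sum_congr rfl fun ω _ => ?_
  split_ifs with hω
  · rw [h ω hω]
  · rfl

lemma cexp_sub (Y Z : Ω → ℝ) (E : Ω → Prop) :
    cexp P (fun ω => Y ω - Z ω) E = cexp P Y E - cexp P Z E := by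
  unfold cexp
  rw [div_sub_div_same, ← sum_sub_distrib]
  congr 1
  exact sum_congr rfl fun ω _ => by split_ifs <;> ring

lemma cexp_mul_pr (hP : ∀ ω, 0 ≤ P ω) (Z : Ω → ℝ) (E : Ω → Prop) :
    cexp P Z E * pr P E = ∑ ω, if E ω then Z ω * P ω else 0 := by
  rcases (pr_nonneg hP E).eq_or_lt with h | h
  · rw [← h, mul_zero]
    exact (sum_eq_zero fun ω _ => by
      split_ifs with hω
      · rw [eq_zero_of_pr_eq_zero hP h.symm hω, mul_zero]
      · rfl).symm
  · exact div_mul_cancel₀ _ h.ne'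

lemma cexp_eq_sum_cexp_mul_pr_div (hP : ∀ ω, 0 ≤ P ω) {𝓧 : Type*} [Fintype 𝓧] (X : Ω → 𝓧)
    (Z : Ω → ℝ) (E : Ω → Prop) :
    cexp P Z E = ∑ x, cexp P Z (fun ω => X ω = x ∧ E ω) *
      (pr P (fun ω => X ω = x ∧ E ω) / pr P E) := by
  simp_rw [← mul_div_assoc, cexp_mul_pr hP, ← sum_div]
  unfold cexp
  rw [sum_comm]
  congr 1
  exact sum_congr rfl fun ω _ => by split_ifs <;> simp [*]

lemma cexp_eq_sum_filter_cexp_mul_pr_div (hP : ∀ ω, 0 ≤ P ω) {𝓧 : Type*} [Fintype 𝓧]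
    (X : Ω → 𝓧) (Z : Ω → ℝ) (E : Ω → Prop) :
    cexp P Z E = ∑ x ∈ univ.filter (fun x => 0 < pr P (fun ω => X ω = x ∧ E ω)),
      cexp P Z (fun ω => X ω = x ∧ E ω) * (pr P (fun ω => X ω = x ∧ E ω) / pr P E) := by
  rw [sum_filter_of_ne fun x _ hx => ?_, cexp_eq_sum_cexp_mul_pr_div hP X]
  refine (pr_nonneg hP _).lt_of_ne fun h0 => hx ?_
  rw [← h0, zero_div, mul_zero]

end FiniteProbability

lemma cexp_potential_eq_cexp_observed {Ω 𝓧 : Type*} [Fintype Ω] (P : Ω → ℝ) {X : Ω → 𝓧}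
    {S A : Ω → ℕ} {Y Ya : Ω → ℝ} {x : 𝓧} {s a : ℕ} (hcons : ∀ ω, A ω = a → Ya ω = Y ω)
    (hexch : cexp P Ya (fun ω => X ω = x ∧ S ω = s) =
      cexp P Ya (fun ω => X ω = x ∧ S ω = s ∧ A ω = a)) :
    cexp P Ya (fun ω => X ω = x ∧ S ω = s) = cexp P Y (fun ω => X ω = x ∧ S ω = s ∧ A ω = a) :=
  hexch.trans (cexp_congr fun ω hω => hcons ω hω.2.2)

lemma eq_mul_div_of_div_eq_div {a b c d : ℝ} (hb : b ≠ 0) (hd : d ≠ 0) (h : a / b = c / d) :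
    a = b * c / d := by
  rw [div_eq_div_iff hb hd] at h
  rw [eq_div_iff hd]
  linear_combination h

theorem stmt10_general    {Ω 𝓧 : Type*} [Fintype Ω] [Fintype 𝓧]
    (P : Ω → ℝ) (hP : ∀ ω, 0 ≤ P ω)
    (X : Ω → 𝓧) (S : Ω → ℕ) (A : Ω → ℕ) (Y : Ω → ℝ)
    (Y0 Y1 Y2 : Ω → ℝ)
    (hcons0 : ∀ ω, A ω = 0 → Y0 ω = Y ω)
    (hcons2 : ∀ ω, A ω = 2 → Y2 ω = Y ω)
    (hcons1 : ∀ ω, A ω = 1 → Y1 ω = Y ω)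
    (hexch0 : ∀ x, 0 < pr P (fun ω => X ω = x ∧ S ω = 1) → cexp P Y0 (fun ω => X ω = x ∧ S ω = 1) = cexp P Y0 (fun ω => X ω = x ∧ S ω = 1 ∧ A ω = 0))
    (hexchext0 : ∀ x, 0 < pr P (fun ω => X ω = x ∧ S ω = 0) → cexp P Y0 (fun ω => X ω = x ∧ S ω = 0) = cexp P Y0 (fun ω => X ω = x ∧ S ω = 0 ∧ A ω = 0))
    (hexchext2 : ∀ x, 0 < pr P (fun ω => X ω = x ∧ S ω = 0) → cexp P Y2 (fun ω => X ω = x ∧ S ω = 0) = cexp P Y2 (fun ω => X ω = x ∧ S ω = 0 ∧ A ω = 2))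
    (hextpos : ∀ x, 0 < pr P (fun ω => X ω = x ∧ S ω = 1) → 0 < cpr P (fun ω => S ω = 0) (fun ω => X ω = x))
    (hexch1 : ∀ x, 0 < pr P (fun ω => X ω = x ∧ S ω = 1) → cexp P Y1 (fun ω => X ω = x ∧ S ω = 1) = cexp P Y1 (fun ω => X ω = x ∧ S ω = 1 ∧ A ω = 1))
    (htransratio : ∀ x, 0 < pr P (fun ω => X ω = x ∧ S ω = 1) → 0 < pr P (fun ω => X ω = x ∧ S ω = 0) →
      cexp P Y2 (fun ω => X ω = x ∧ S ω = 1) / cexp P Y0 (fun ω => X ω = x ∧ S ω = 1) =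
      cexp P Y2 (fun ω => X ω = x ∧ S ω = 0) / cexp P Y0 (fun ω => X ω = x ∧ S ω = 0))
    (hne : ∀ x, 0 < pr P (fun ω => X ω = x ∧ S ω = 1) → 0 < pr P (fun ω => X ω = x ∧ S ω = 0) →
      cexp P Y2 (fun ω => X ω = x ∧ S ω = 1) ≠ 0 ∧ cexp P Y0 (fun ω => X ω = x ∧ S ω = 1) ≠ 0 ∧
      cexp P Y2 (fun ω => X ω = x ∧ S ω = 0) ≠ 0 ∧ cexp P Y0 (fun ω => X ω = x ∧ S ω = 0) ≠ 0)
    : cexp P (fun ω => Y1 ω - Y2 ω) (fun ω => S ω = 1) =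
      ∑ x ∈ univ.filter (fun x => 0 < pr P (fun ω => X ω = x ∧ S ω = 1)),
        (cexp P Y (fun ω => X ω = x ∧ S ω = 1 ∧ A ω = 1) -
          cexp P Y (fun ω => X ω = x ∧ S ω = 1 ∧ A ω = 0) * cexp P Y (fun ω => X ω = x ∧ S ω = 0 ∧ A ω = 2) /
            cexp P Y (fun ω => X ω = x ∧ S ω = 0 ∧ A ω = 0)) *
        (pr P (fun ω => X ω = x ∧ S ω = 1) / pr P (fun ω => S ω = 1)) := by
  rw [cexp_sub, cexp_eq_sum_filter_cexp_mul_pr_div hP X Y1, cexp_eq_sum_filter_cexp_mul_pr_div hP X Y2,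
    ← sum_sub_distrib]
  refine sum_congr rfl fun x hx => ?_
  have hx1 := (mem_filter.mp hx).2
  have hx0 : 0 < pr P (fun ω => X ω = x ∧ S ω = 0) := pr_and_pos_of_cpr_pos hP (hextpos x hx1)
  obtain ⟨-, hY0trial, -, hY0ext⟩ := hne x hx1 hx0
  have transport := eq_mul_div_of_div_eq_div hY0trial hY0ext (htransratio x hx1 hx0)
  rw [transport, cexp_potential_eq_cexp_observed P hcons1 (hexch1 x hx1),
    cexp_potential_eq_cexp_observed P hcons0 (hexch0 x hx1),
    cexp_potential_eq_cexp_observed P hcons0 (hexchext0 x hx0),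
    cexp_potential_eq_cexp_observed P hcons2 (hexchext2 x hx0)]
  ring

theorem stmt10    {Ω 𝓧 : Type*} [Fintype Ω] [Fintype 𝓧]
    (P : Ω → ℝ) (hP : ∀ ω, 0 ≤ P ω) (hPsum : ∑ ω, P ω = 1)
    (X : Ω → 𝓧) (S : Ω → ℕ) (A : Ω → ℕ) (Y : Ω → ℝ)
    (Y0 Y1 Y2 : Ω → ℝ)
    (hS1 : 0 < pr P (fun ω => S ω = 1))
    (hcons0 : ∀ ω, A ω = 0 → Y0 ω = Y ω)
    (hcons2 : ∀ ω, A ω = 2 → Y2 ω = Y ω)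
    (hcons1 : ∀ ω, A ω = 1 → Y1 ω = Y ω)
    (hexch0 : ∀ x, 0 < pr P (fun ω => X ω = x ∧ S ω = 1) → cexp P Y0 (fun ω => X ω = x ∧ S ω = 1) = cexp P Y0 (fun ω => X ω = x ∧ S ω = 1 ∧ A ω = 0))
    (hpos0 : ∀ x, 0 < pr P (fun ω => X ω = x ∧ S ω = 1) → 0 < cpr P (fun ω => A ω = 0) (fun ω => X ω = x ∧ S ω = 1))
    (hexchext0 : ∀ x, 0 < pr P (fun ω => X ω = x ∧ S ω = 0) → cexp P Y0 (fun ω => X ω = x ∧ S ω = 0) = cexp P Y0 (fun ω => X ω = x ∧ S ω = 0 ∧ A ω = 0))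
    (hexchext2 : ∀ x, 0 < pr P (fun ω => X ω = x ∧ S ω = 0) → cexp P Y2 (fun ω => X ω = x ∧ S ω = 0) = cexp P Y2 (fun ω => X ω = x ∧ S ω = 0 ∧ A ω = 2))
    (hposext0 : ∀ x, 0 < pr P (fun ω => X ω = x ∧ S ω = 0) → 0 < cpr P (fun ω => A ω = 0) (fun ω => X ω = x ∧ S ω = 0))
    (hposext2 : ∀ x, 0 < pr P (fun ω => X ω = x ∧ S ω = 0) → 0 < cpr P (fun ω => A ω = 2) (fun ω => X ω = x ∧ S ω = 0))
    (hextpos : ∀ x, 0 < pr P (fun ω => X ω = x ∧ S ω = 1) → 0 < cpr P (fun ω => S ω = 0) (fun ω => X ω = x))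
    (hexch1 : ∀ x, 0 < pr P (fun ω => X ω = x ∧ S ω = 1) → cexp P Y1 (fun ω => X ω = x ∧ S ω = 1) = cexp P Y1 (fun ω => X ω = x ∧ S ω = 1 ∧ A ω = 1))
    (hpos1 : ∀ x, 0 < pr P (fun ω => X ω = x ∧ S ω = 1) → 0 < cpr P (fun ω => A ω = 1) (fun ω => X ω = x ∧ S ω = 1))
    (htransratio : ∀ x, 0 < pr P (fun ω => X ω = x ∧ S ω = 1) → 0 < pr P (fun ω => X ω = x ∧ S ω = 0) →
      cexp P Y2 (fun ω => X ω = x ∧ S ω = 1) / cexp P Y0 (fun ω => X ω = x ∧ S ω = 1) =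
      cexp P Y2 (fun ω => X ω = x ∧ S ω = 0) / cexp P Y0 (fun ω => X ω = x ∧ S ω = 0))
    (hne : ∀ x, 0 < pr P (fun ω => X ω = x ∧ S ω = 1) → 0 < pr P (fun ω => X ω = x ∧ S ω = 0) →
      cexp P Y2 (fun ω => X ω = x ∧ S ω = 1) ≠ 0 ∧ cexp P Y0 (fun ω => X ω = x ∧ S ω = 1) ≠ 0 ∧
      cexp P Y2 (fun ω => X ω = x ∧ S ω = 0) ≠ 0 ∧ cexp P Y0 (fun ω => X ω = x ∧ S ω = 0) ≠ 0)
    : cexp P (fun ω => Y1 ω - Y2 ω) (fun ω => S ω = 1) =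
      ∑ x ∈ univ.filter (fun x => 0 < pr P (fun ω => X ω = x ∧ S ω = 1)),
        (cexp P Y (fun ω => X ω = x ∧ S ω = 1 ∧ A ω = 1) -
          cexp P Y (fun ω => X ω = x ∧ S ω = 1 ∧ A ω = 0) * cexp P Y (fun ω => X ω = x ∧ S ω = 0 ∧ A ω = 2) /
            cexp P Y (fun ω => X ω = x ∧ S ω = 0 ∧ A ω = 0)) *
        (pr P (fun ω => X ω = x ∧ S ω = 1) / pr P (fun ω => S ω = 1)) :=
  stmt10_general P hP X S A Y Y0 Y1 Y2 hcons0 hcons2 hcons1 hexch0 hexchext0 hexchext2 hextpos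
    hexch1 htransratio hne
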